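/- Let C = {x + sω : ω ∈ S_θ, 0 < s < a} be a finite right spherical cone in ℝ^N (N ≥ 2) with vertex x, axis direction e, opening width θ ∈ (0, π/2], and height a > 0. For any f ∈ C¹ on the closure of C, |f(x) − ⨍_C f| ≤ ∫_C (|∇f(y)|/|y−x|^{N−1}) · ((a^N − |y−x|^N)/N) dμ_y, where dμ_y = dy/|C| is the normalized Lebesgue measure on C. -/

import Mathlib

open MeasureTheory Real Set
open scoped ENNReal RealInnerProductSpace

noncomputable section

/-- The finite right spherical cone with vertex `x`, axis `e`, opening width `θ`, height `a`. -/
def sphericalCone {N : ℕ} (x e : EuclideanSpace ℝ (Fin N)) (θ a : ℝ) :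
    Set (EuclideanSpace ℝ (Fin N)) :=
  {y | ∃ (s : ℝ) (ω : EuclideanSpace ℝ (Fin N)),
    0 < s ∧ s < a ∧ ‖ω‖ = 1 ∧ Real.cos θ < ⟪ω, e⟫ ∧ y = x + s • ω}

variable {N : ℕ} {x e : EuclideanSpace ℝ (Fin N)} {θ a : ℝ}

lemma cone_eq :
    sphericalCone x e θ a =
      {y | 0 < ‖y - x‖ ∧ ‖y - x‖ < a ∧ Real.cos θ * ‖y - x‖ < ⟪y - x, e⟫} := by
  ext y
  constructor
  · rintro ⟨s, ω, hs, hsa, hω, hcos, rfl⟩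
    have h1 : x + s • ω - x = s • ω := add_sub_cancel_left x _
    simp only [Set.mem_setOf_eq, h1]
    have hn : ‖s • ω‖ = s := by
      rw [norm_smul, hω, Real.norm_eq_abs, abs_of_pos hs, mul_one]
    refine ⟨by rw [hn]; exact hs, by rw [hn]; exact hsa, ?_⟩
    rw [real_inner_smul_left, hn]
    rw [mul_comm]
    exact (mul_lt_mul_iff_right₀ hs).mpr hcos
  · rintro ⟨h0, ha', hcos⟩
    refine ⟨‖y - x‖, ‖y - x‖⁻¹ • (y - x), h0, ha', ?_, ?_, ?_⟩
    · rw [norm_smul, norm_inv, norm_norm, inv_mul_cancel₀ h0.ne']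
    · rw [real_inner_smul_left]
      rw [← div_eq_inv_mul]
      exact (lt_div_iff₀ h0).mpr hcos
    · rw [smul_smul, mul_inv_cancel₀ h0.ne', one_smul]
      abel

lemma cone_isOpen : IsOpen (sphericalCone x e θ a) := by
  rw [cone_eq]
  have h1 : IsOpen {y : EuclideanSpace ℝ (Fin N) | 0 < ‖y - x‖} :=
    isOpen_lt continuous_const ((continuous_id.sub continuous_const).norm)
  have h2 : IsOpen {y : EuclideanSpace ℝ (Fin N) | ‖y - x‖ < a} :=
    isOpen_lt ((continuous_id.sub continuous_const).norm) continuous_const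
  have h3 : IsOpen {y : EuclideanSpace ℝ (Fin N) | Real.cos θ * ‖y - x‖ < ⟪y - x, e⟫} :=
    isOpen_lt (continuous_const.mul ((continuous_id.sub continuous_const).norm))
      (Continuous.inner (continuous_id.sub continuous_const) continuous_const)
  have : {y : EuclideanSpace ℝ (Fin N) | 0 < ‖y - x‖ ∧ ‖y - x‖ < a ∧ Real.cos θ * ‖y - x‖ < ⟪y - x, e⟫}
      = {y | 0 < ‖y - x‖} ∩ ({y | ‖y - x‖ < a} ∩ {y | Real.cos θ * ‖y - x‖ < ⟪y - x, e⟫}) := rfl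
  rw [this]
  exact h1.inter (h2.inter h3)

lemma cone_subset_ball : sphericalCone x e θ a ⊆ Metric.ball x a := by
  rw [cone_eq]
  rintro y ⟨-, h, -⟩
  simpa [Metric.mem_ball, dist_eq_norm] using h

lemma cone_nonempty (hθ : θ ∈ Set.Ioc 0 (π / 2)) (ha : 0 < a) (he : ‖e‖ = 1) :
    (sphericalCone x e θ a).Nonempty := by
  refine ⟨x + (a / 2) • e, a / 2, e, by positivity, by linarith, he, ?_, rfl⟩
  have h1 : ⟪e, e⟫ = (1 : ℝ) := by
    rw [real_inner_self_eq_norm_sq, he]; norm_num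
  rw [h1]
  calc Real.cos θ < Real.cos 0 := by
        apply Real.cos_lt_cos_of_nonneg_of_le_pi le_rfl ?_ hθ.1
        linarith [Real.pi_pos, hθ.2]
    _ = 1 := Real.cos_zero

lemma cone_mem_scale_iff {t : ℝ} (ht : 0 < t) (ht1 : t ≤ 1) (ha : 0 < a)
    {y : EuclideanSpace ℝ (Fin N)} :
    x + t • (y - x) ∈ sphericalCone x e θ a ∩ Metric.ball x (t * a) ↔
      y ∈ sphericalCone x e θ a := by
  have hzx : x + t • (y - x) - x = t • (y - x) := add_sub_cancel_left x _
  have hn : ‖t • (y - x)‖ = t * ‖y - x‖ := by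
    rw [norm_smul, Real.norm_eq_abs, abs_of_pos ht]
  simp only [cone_eq, Set.mem_inter_iff, Set.mem_setOf_eq, Metric.mem_ball, dist_eq_norm, hzx,
    hn, real_inner_smul_left]
  constructor
  · rintro ⟨⟨h0, -, hc⟩, hb⟩
    refine ⟨by nlinarith , (mul_lt_mul_iff_right₀ ht).mp hb, ?_⟩
    have := hc
    rw [mul_comm (Real.cos θ) (t * ‖y - x‖)] at this
    nlinarith [this]
  · rintro ⟨h0, hb, hc⟩
    refine ⟨⟨by positivity, ?_, ?_⟩, (mul_lt_mul_iff_right₀ ht).mpr hb⟩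
    · calc t * ‖y - x‖ ≤ 1 * ‖y - x‖ := by nlinarith
        _ = ‖y - x‖ := one_mul _
        _ < a := hb
    · calc Real.cos θ * (t * ‖y - x‖) = t * (Real.cos θ * ‖y - x‖) := by ring
        _ < t * ⟪y - x, e⟫ := by exact (mul_lt_mul_iff_right₀ ht).mpr hc

lemma cone_smul_mem {t : ℝ} (ht : 0 < t) (ht1 : t ≤ 1) (ha : 0 < a)
    {y : EuclideanSpace ℝ (Fin N)} (hy : y ∈ sphericalCone x e θ a) :
    x + t • (y - x) ∈ sphericalCone x e θ a :=
  ((cone_mem_scale_iff ht ht1 ha).mpr hy).1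

lemma vertex_mem_closure (ha : 0 < a) (hne : (sphericalCone x e θ a).Nonempty) :
    x ∈ closure (sphericalCone x e θ a) := by
  obtain ⟨y, hy⟩ := hne
  rw [mem_closure_iff_seq_limit]
  refine ⟨fun n => x + ((1 : ℝ) / (n + 1)) • (y - x), fun n => ?_, ?_⟩
  · exact cone_smul_mem (by positivity) (by
      rw [div_le_one (by positivity)]; linarith [Nat.cast_nonneg (α := ℝ) n]) ha hy
  · have h1 : Filter.Tendsto (fun n : ℕ => (1 : ℝ) / (n + 1)) Filter.atTop (nhds 0) :=
      tendsto_one_div_add_atTop_nhds_zero_nat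
    have := ((h1.smul_const (y - x)).const_add x)
    simpa using this

lemma segment_mem_closure (ha : 0 < a) {y : EuclideanSpace ℝ (Fin N)}
    (hy : y ∈ sphericalCone x e θ a) {t : ℝ} (ht : t ∈ Set.Icc (0:ℝ) 1) :
    x + t • (y - x) ∈ closure (sphericalCone x e θ a) := by
  rcases eq_or_lt_of_le ht.1 with h0 | h0
  · rw [← h0]
    simpa using vertex_mem_closure ha ⟨y, hy⟩
  · exact subset_closure (cone_smul_mem h0 ht.2 ha hy)

lemma exists_fderiv_bound {E : Type*} [NormedAddCommGroup E] [NormedSpace ℝ E]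
    {f : E → ℝ} {S : Set E} (hS : IsOpen S)
    (hf : ContDiffOn ℝ 1 f (closure S)) (hcomp : IsCompact (closure S)) :
    ∃ M : ℝ, 0 ≤ M ∧ ∀ z ∈ S, ‖fderiv ℝ f z‖ ≤ M := by
  have key : ∀ p : E, ∃ wB : Set E × ℝ, p ∈ closure S →
      (IsOpen wB.1 ∧ p ∈ wB.1 ∧ ∀ z ∈ wB.1 ∩ S, ‖fderiv ℝ f z‖ ≤ wB.2) := by
    intro p
    by_cases hp : p ∈ closure S
    · have h1 : ContDiffWithinAt ℝ (0 + 1) f (closure S) p := by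
        norm_num
        exact hf p hp
      obtain ⟨u, hu, -, f', hf'u, hf'c⟩ :=
        (contDiffWithinAt_succ_iff_hasFDerivWithinAt (by simp)).mp h1
      rw [Set.insert_eq_self.mpr hp] at hu
      obtain ⟨v, hv_open, hpv, hvu⟩ := mem_nhdsWithin.mp hu
      have hpu : p ∈ u := mem_of_mem_nhdsWithin hp hu
      have hcont : Filter.Tendsto (fun z => ‖f' z‖) (nhdsWithin p u) (nhds ‖f' p‖) :=
        (hf'c.continuousWithinAt).norm
      have hev : ∀ᶠ z in nhdsWithin p u, ‖f' z‖ < ‖f' p‖ + 1 :=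
        hcont.eventually_lt_const (lt_add_one _)
      rw [eventually_nhdsWithin_iff] at hev
      obtain ⟨v', hv', hv'open, hpv'⟩ := eventually_nhds_iff.mp hev
      refine ⟨⟨v ∩ v', ‖f' p‖ + 1⟩, fun _ => ⟨hv_open.inter hv'open, ⟨hpv, hpv'⟩, ?_⟩⟩
      rintro z ⟨⟨hzv, hzv'⟩, hzS⟩
      have hzu : z ∈ u := hvu ⟨hzv, subset_closure hzS⟩
      have hfd : HasFDerivAt f (f' z) z := by
        apply (hf'u z hzu).hasFDerivAt
        exact Filter.mem_of_superset ((hv_open.inter hS).mem_nhds ⟨hzv, hzS⟩)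
          (fun w hw => hvu ⟨hw.1, subset_closure hw.2⟩)
      rw [hfd.fderiv]
      exact (hv' z hzv' hzu).le
    · exact ⟨⟨Set.univ, 0⟩, fun h => absurd h hp⟩
  choose wB hwB using key
  have hU : ∀ p ∈ closure S, (wB p).1 ∈ nhds p := fun p hp =>
    ((hwB p hp).1).mem_nhds (hwB p hp).2.1
  obtain ⟨t, htsub, htcover⟩ := hcomp.elim_nhds_subcover (fun p => (wB p).1) hU
  refine ⟨∑ p ∈ t, |(wB p).2|, Finset.sum_nonneg (fun p _ => abs_nonneg _), ?_⟩
  intro z hz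
  have hzc : z ∈ closure S := subset_closure hz
  obtain ⟨p, hpt, hzp⟩ := Set.mem_iUnion₂.mp (htcover hzc)
  calc ‖fderiv ℝ f z‖ ≤ (wB p).2 := (hwB p (htsub p hpt)).2.2 z ⟨hzp, hz⟩
    _ ≤ |(wB p).2| := le_abs_self _
    _ ≤ ∑ q ∈ t, |(wB q).2| := Finset.single_le_sum (f := fun q => |(wB q).2|) (fun q _ => abs_nonneg _) hpt

lemma ftc_bound (ha : 0 < a) {f : EuclideanSpace ℝ (Fin N) → ℝ}
    (hf : ContDiffOn ℝ 1 f (closure (sphericalCone x e θ a)))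
    {M : ℝ} (hM : ∀ z ∈ sphericalCone x e θ a, ‖fderiv ℝ f z‖ ≤ M)
    {y : EuclideanSpace ℝ (Fin N)} (hy : y ∈ sphericalCone x e θ a) :
    ENNReal.ofReal |f x - f y| ≤
      ∫⁻ t in Set.Ioo (0:ℝ) 1, ENNReal.ofReal (‖fderiv ℝ f (x + t • (y - x))‖ * ‖y - x‖) := by
  set S := sphericalCone x e θ a with hS
  set γ : ℝ → EuclideanSpace ℝ (Fin N) := fun t => x + t • (y - x) with hγ
  have hγcont : Continuous γ := by
    exact (continuous_const.add (continuous_id.smul continuous_const) : Continuous fun t : ℝ => x + t • (y - x))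
  set g' : ℝ → ℝ := fun t => fderiv ℝ f (γ t) (y - x) with hg'
  set φ : ℝ → ℝ := fun t => ‖fderiv ℝ f (γ t)‖ * ‖y - x‖ with hφ
  -- γ maps (0,1] into S
  have hmem : ∀ t ∈ Set.Ioc (0:ℝ) 1, γ t ∈ S := fun t ht => cone_smul_mem ht.1 ht.2 ha hy
  -- derivative of γ
  have hγderiv : ∀ t : ℝ, HasDerivAt γ (y - x) t := by
    intro t
    have h1 : HasDerivAt (fun s : ℝ => s • (y - x)) ((1:ℝ) • (y - x)) t :=
      (hasDerivAt_id t).smul_const (y - x)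
    have h2 := h1.const_add x
    simp only [one_smul] at h2
    exact h2
  -- derivative of f ∘ γ on Ioo
  have hderiv : ∀ t ∈ Set.Ioo (0:ℝ) 1, HasDerivAt (f ∘ γ) (g' t) t := by
    intro t ht
    have hz : γ t ∈ S := hmem t ⟨ht.1, ht.2.le⟩
    have hd : DifferentiableAt ℝ f (γ t) := by
      have h1 : ContDiffWithinAt ℝ 1 f (closure S) (γ t) := hf (γ t) (subset_closure hz)
      have h2 : closure S ∈ nhds (γ t) :=
        Filter.mem_of_superset (cone_isOpen.mem_nhds hz) subset_closure
      exact (h1.contDiffAt h2).differentiableAt one_ne_zero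
    exact hd.hasFDerivAt.comp_hasDerivAt t (hγderiv t)
  -- continuity of f ∘ γ on Icc
  have hcont : ContinuousOn (f ∘ γ) (Set.Icc (0:ℝ) 1) := by
    apply hf.continuousOn.comp hγcont.continuousOn
    intro t ht
    exact segment_mem_closure ha hy ht
  -- measurability
  have hg'meas : Measurable g' :=
    (measurable_fderiv_apply_const ℝ f (y - x)).comp hγcont.measurable
  have hφmeas : Measurable φ :=
    (((measurable_fderiv ℝ f).comp hγcont.measurable).norm).mul measurable_const
  -- bounds
  have hb : ∀ t ∈ Set.Ioc (0:ℝ) 1, |g' t| ≤ M * ‖y - x‖ := by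
    intro t ht
    calc |g' t| = ‖fderiv ℝ f (γ t) (y - x)‖ := rfl
      _ ≤ ‖fderiv ℝ f (γ t)‖ * ‖y - x‖ := ContinuousLinearMap.le_opNorm _ _
      _ ≤ M * ‖y - x‖ := by
          have := hM (γ t) (hmem t ht)
          exact mul_le_mul_of_nonneg_right this (norm_nonneg _)
  have hint : IntervalIntegrable g' volume 0 1 := by
    rw [intervalIntegrable_iff_integrableOn_Ioc_of_le zero_le_one]
    apply Integrable.mono' (integrable_const (M * ‖y - x‖))
      hg'meas.aestronglyMeasurable
    rw [ae_restrict_iff' measurableSet_Ioc]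
    exact Filter.Eventually.of_forall (fun t ht => hb t ht)
  have hφint : IntegrableOn φ (Set.Ioo (0:ℝ) 1) volume := by
    apply Integrable.mono' (integrable_const (M * ‖y - x‖))
      hφmeas.aestronglyMeasurable
    rw [ae_restrict_iff' measurableSet_Ioo]
    refine Filter.Eventually.of_forall (fun t ht => ?_)
    rw [Real.norm_eq_abs, abs_of_nonneg (by positivity)]
    exact mul_le_mul_of_nonneg_right (hM (γ t) (hmem t ⟨ht.1, ht.2.le⟩)) (norm_nonneg _)
  have hφint' : IntervalIntegrable φ volume 0 1 := by
    rw [intervalIntegrable_iff_integrableOn_Ioc_of_le zero_le_one]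
    rwa [← integrableOn_Ioc_iff_integrableOn_Ioo] at hφint
  -- FTC
  have hftc : ∫ t in (0:ℝ)..1, g' t = (f ∘ γ) 1 - (f ∘ γ) 0 :=
    intervalIntegral.integral_eq_sub_of_hasDerivAt_of_le zero_le_one hcont hderiv hint
  have hγ1 : γ 1 = y := by simp [hγ]
  have hγ0 : γ 0 = x := by simp [hγ]
  have habs : |f x - f y| ≤ ∫ t in (0:ℝ)..1, φ t := by
    have h1 : f x - f y = -∫ t in (0:ℝ)..1, g' t := by
      rw [hftc]; simp [hγ1, hγ0]
    rw [h1, abs_neg]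
    calc |∫ t in (0:ℝ)..1, g' t| ≤ ∫ t in (0:ℝ)..1, |g' t| :=
          intervalIntegral.abs_integral_le_integral_abs zero_le_one
      _ ≤ ∫ t in (0:ℝ)..1, φ t := by
          apply intervalIntegral.integral_mono_on zero_le_one hint.abs hφint'
          intro t _
          calc |g' t| = ‖fderiv ℝ f (γ t) (y - x)‖ := rfl
            _ ≤ φ t := ContinuousLinearMap.le_opNorm _ _
  -- convert to lintegral
  have h2 : ∫ t in (0:ℝ)..1, φ t = ∫ t in Set.Ioo (0:ℝ) 1, φ t := by
    rw [intervalIntegral.integral_of_le zero_le_one, ← MeasureTheory.integral_Ioc_eq_integral_Ioo]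
  have h3 : ENNReal.ofReal (∫ t in Set.Ioo (0:ℝ) 1, φ t)
      = ∫⁻ t in Set.Ioo (0:ℝ) 1, ENNReal.ofReal (φ t) := by
    apply ofReal_integral_eq_lintegral_ofReal hφint
    exact Filter.Eventually.of_forall (fun t => by positivity)
  calc ENNReal.ofReal |f x - f y| ≤ ENNReal.ofReal (∫ t in Set.Ioo (0:ℝ) 1, φ t) := by
        apply ENNReal.ofReal_le_ofReal
        rw [← h2]; exact habs
    _ = ∫⁻ t in Set.Ioo (0:ℝ) 1, ENNReal.ofReal (φ t) := h3


lemma scale_lintegral {t : ℝ} (ht : 0 < t) (H : EuclideanSpace ℝ (Fin N) → ℝ≥0∞)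
    (hH : Measurable H) :
    ∫⁻ y, H (x + t • (y - x)) = ENNReal.ofReal ((t ^ N)⁻¹) * ∫⁻ z, H z := by
  have hK2 : Measurable (fun z : EuclideanSpace ℝ (Fin N) => H (x + z)) :=
    hH.comp (measurable_const_add x)
  have hmeas1 : Measurable (fun y : EuclideanSpace ℝ (Fin N) => H (x + t • (y - x))) := by
    apply hH.comp
    measurability
  have step1 : ∫⁻ y, H (x + t • (y - x)) = ∫⁻ w, H (x + t • w) := by
    rw [← (measurePreserving_add_right (volume : Measure (EuclideanSpace ℝ (Fin N))) x).lintegral_comp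
      hmeas1]
    simp
  have step2 : ∫⁻ w, H (x + t • w) = ENNReal.ofReal ((t ^ N)⁻¹) * ∫⁻ z, H (x + z) := by
    have h1 : ∫⁻ z, H (x + z)
        ∂(Measure.map (fun w : EuclideanSpace ℝ (Fin N) => t • w) volume)
        = ∫⁻ w, H (x + t • w) := lintegral_map hK2 (measurable_id.const_smul t)
    rw [← h1, Measure.map_addHaar_smul volume ht.ne', lintegral_smul_measure,
      finrank_euclideanSpace_fin, abs_of_nonneg (by positivity), smul_eq_mul]
  have step3 : ∫⁻ z, H (x + z) = ∫⁻ z, H z :=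
    (measurePreserving_add_left (volume : Measure (EuclideanSpace ℝ (Fin N))) x).lintegral_comp hH
  rw [step1, step2, step3]


lemma real_cone_algebra {c s aa : ℝ} (hs : 0 < s) (ha : 0 < aa) {n : ℕ} (hn : 1 ≤ n) :
    (c * s) * ((1 - (s / aa) ^ (-(n:ℤ))) / (-(n:ℝ)))
      = c / s ^ (n - 1) * ((aa ^ n - s ^ n) / n) := by
  obtain ⟨K, rfl⟩ : ∃ K, n = K + 1 := ⟨n - 1, by omega⟩
  have h1 : (K + 1) - 1 = K := by omega
  rw [h1]
  have hzp : (s / aa) ^ (-(K+1:ℕ):ℤ) = ((s / aa) ^ (K+1))⁻¹ := by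
    rw [zpow_neg, zpow_natCast]
  rw [hzp, div_pow, inv_div]
  have hs' : s ≠ 0 := hs.ne'
  have ha' : aa ≠ 0 := ha.ne'
  have hK0 : ((K:ℝ) + 1) ≠ 0 := by positivity
  have hsp : (s:ℝ) ^ (K+1) ≠ 0 := by positivity
  push_cast
  rw [div_neg, ← neg_div, neg_sub, div_sub_one hsp, div_div]
  field_simp
  ring

theorem stmt0 {N : ℕ} (hN : 2 ≤ N) (x e : EuclideanSpace ℝ (Fin N)) (θ a : ℝ)
    (hθ : θ ∈ Set.Ioc 0 (π / 2)) (ha : 0 < a) (he : ‖e‖ = 1)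
    (C : Set (EuclideanSpace ℝ (Fin N))) (hC : C = sphericalCone x e θ a)
    (f : EuclideanSpace ℝ (Fin N) → ℝ) (hf : ContDiffOn ℝ 1 f (closure C)) :
    |f x - (∫ y in C, f y) / (volume C).toReal| ≤
      ∫ y in C,
        (‖gradient f y‖ / ‖y - x‖ ^ (N - 1)) * ((a ^ N - ‖y - x‖ ^ N) / N) /
          (volume C).toReal := by
  subst hC
  set S := sphericalCone x e θ a with hSdef
  have hopen : IsOpen S := cone_isOpen
  have hmeasS : MeasurableSet S := hopen.measurableSet
  have hne : S.Nonempty := cone_nonempty hθ ha he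
  have hball : S ⊆ Metric.ball x a := cone_subset_ball
  have hvolpos : 0 < volume S := hopen.measure_pos volume hne
  have hvolfin : volume S < ⊤ := lt_of_le_of_lt (measure_mono hball) measure_ball_lt_top
  have hcl : IsCompact (closure S) := by
    apply Metric.isCompact_of_isClosed_isBounded isClosed_closure
    exact (Metric.isBounded_ball.subset hball).closure
  have hvC : 0 < (volume S).toReal := ENNReal.toReal_pos hvolpos.ne' hvolfin.ne
  obtain ⟨M, hM0, hM⟩ := exists_fderiv_bound hopen hf hcl
  have hgradnorm : ∀ z, ‖gradient f z‖ = ‖fderiv ℝ f z‖ := fun z =>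
    (InnerProductSpace.toDual ℝ (EuclideanSpace ℝ (Fin N))).symm.norm_map (fderiv ℝ f z)
  have hsx : ∀ z ∈ S, 0 < ‖z - x‖ ∧ ‖z - x‖ < a := by
    intro z hz
    rw [hSdef, cone_eq] at hz
    exact ⟨hz.1, hz.2.1⟩
  -- the key functions
  set F : ℝ → EuclideanSpace ℝ (Fin N) → ℝ≥0∞ :=
    fun t y => ENNReal.ofReal (‖fderiv ℝ f (x + t • (y - x))‖ * ‖y - x‖) with hFdef
  set q : EuclideanSpace ℝ (Fin N) → ℝ≥0∞ :=
    fun z => ENNReal.ofReal (‖fderiv ℝ f z‖ * ‖z - x‖) with hqdef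
  set G : EuclideanSpace ℝ (Fin N) → ℝ :=
    fun z => (‖fderiv ℝ f z‖ / ‖z - x‖ ^ (N - 1)) * ((a ^ N - ‖z - x‖ ^ N) / N) with hGdef
  have hqmeas : Measurable q := by
    rw [hqdef]
    apply Measurable.ennreal_ofReal
    exact ((measurable_fderiv ℝ f).norm).mul (measurable_id.sub_const x).norm
  have hFmeas : Measurable (Function.uncurry F) := by
    simp only [hFdef]
    apply Measurable.ennreal_ofReal
    apply Measurable.mul
    · apply Measurable.norm
      apply (measurable_fderiv ℝ f).comp
      exact (continuous_const.add (continuous_fst.smul (continuous_snd.sub continuous_const))).measurable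
    · exact ((continuous_snd.sub continuous_const).norm).measurable
  have hGmeas : Measurable G := by
    rw [hGdef]
    apply Measurable.mul
    · exact ((measurable_fderiv ℝ f).norm).div ((measurable_id.sub_const x).norm.pow_const _)
    · exact (measurable_const.sub ((measurable_id.sub_const x).norm.pow_const _)).div_const _
  -- Step B : pointwise FTC bound
  have hB : ∫⁻ y in S, ENNReal.ofReal |f x - f y| ≤
      ∫⁻ y in S, ∫⁻ t in Set.Ioo (0:ℝ) 1, F t y := by
    apply setLIntegral_mono' hmeasS
    intro y hy
    exact ftc_bound ha hf hM hy
  -- Step : first swap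
  have hswap1 : ∫⁻ y in S, ∫⁻ t in Set.Ioo (0:ℝ) 1, F t y
      = ∫⁻ t in Set.Ioo (0:ℝ) 1, ∫⁻ y in S, F t y := by
    apply lintegral_lintegral_swap
    exact (hFmeas.comp measurable_swap).aemeasurable
  -- Step : change of variables for fixed t
  have hchg : ∀ t ∈ Set.Ioo (0:ℝ) 1, ∫⁻ y in S, F t y
      = ENNReal.ofReal (t⁻¹ * (t ^ N)⁻¹) *
        ∫⁻ z in S, (Metric.ball x (t * a)).indicator q z := by
    intro t ht
    have ht0 : 0 < t := ht.1
    have hInd : Measurable ((S ∩ Metric.ball x (t * a)).indicator q) :=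
      hqmeas.indicator (hmeasS.inter measurableSet_ball)
    have h1 : ∀ y, S.indicator (fun y => F t y) y
        = ENNReal.ofReal t⁻¹ * ((S ∩ Metric.ball x (t * a)).indicator q (x + t • (y - x))) := by
      intro y
      by_cases hy : y ∈ S
      · rw [Set.indicator_of_mem hy, Set.indicator_of_mem ((cone_mem_scale_iff ht0 ht.2.le ha).mpr hy)]
        have hn : ‖x + t • (y - x) - x‖ = t * ‖y - x‖ := by
          rw [add_sub_cancel_left, norm_smul, Real.norm_eq_abs, abs_of_pos ht0]
        simp only [hFdef, hqdef]
        rw [hn, ← ENNReal.ofReal_mul (inv_nonneg.mpr ht0.le)]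
        congr 1
        field_simp
      · rw [Set.indicator_of_notMem hy,
          Set.indicator_of_notMem (fun hmem => hy ((cone_mem_scale_iff ht0 ht.2.le ha).mp hmem)),
          mul_zero]
    calc ∫⁻ y in S, F t y = ∫⁻ y, S.indicator (fun y => F t y) y := by
          rw [lintegral_indicator hmeasS]
      _ = ∫⁻ y, ENNReal.ofReal t⁻¹ *
            ((S ∩ Metric.ball x (t * a)).indicator q (x + t • (y - x))) := by
          exact lintegral_congr h1
      _ = ENNReal.ofReal t⁻¹ *
            ∫⁻ y, (S ∩ Metric.ball x (t * a)).indicator q (x + t • (y - x)) := by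
          apply lintegral_const_mul
          apply hInd.comp
          exact (by fun_prop : Continuous fun y => x + t • (y - x)).measurable
      _ = ENNReal.ofReal t⁻¹ * (ENNReal.ofReal ((t ^ N)⁻¹) *
            ∫⁻ z, (S ∩ Metric.ball x (t * a)).indicator q z) := by
          rw [scale_lintegral ht0 _ hInd]
      _ = ENNReal.ofReal (t⁻¹ * (t ^ N)⁻¹) *
            ∫⁻ z in S ∩ Metric.ball x (t * a), q z := by
          rw [lintegral_indicator (hmeasS.inter measurableSet_ball), ← mul_assoc,
            ← ENNReal.ofReal_mul (inv_nonneg.mpr ht0.le)]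
      _ = ENNReal.ofReal (t⁻¹ * (t ^ N)⁻¹) *
            ∫⁻ z in S, (Metric.ball x (t * a)).indicator q z := by
          rw [lintegral_indicator measurableSet_ball, Measure.restrict_restrict measurableSet_ball,
            Set.inter_comm]
  -- Ψ
  set Ψ : ℝ → EuclideanSpace ℝ (Fin N) → ℝ≥0∞ :=
    fun t z => ENNReal.ofReal (t⁻¹ * (t ^ N)⁻¹) * (Metric.ball x (t * a)).indicator q z with hΨdef
  have hA1 : ∫⁻ t in Set.Ioo (0:ℝ) 1, ∫⁻ y in S, F t y
      = ∫⁻ t in Set.Ioo (0:ℝ) 1, ∫⁻ z in S, Ψ t z := by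
    apply setLIntegral_congr_fun measurableSet_Ioo
    intro t ht
    dsimp only
    rw [hchg t ht]
    rw [← lintegral_const_mul _ (hqmeas.indicator measurableSet_ball)]
  have hΨmeas : Measurable (Function.uncurry Ψ) := by
    have : Function.uncurry Ψ = fun p : ℝ × EuclideanSpace ℝ (Fin N) =>
        ENNReal.ofReal (p.1⁻¹ * (p.1 ^ N)⁻¹) *
          (if dist p.2 x < p.1 * a then q p.2 else 0) := by
      funext p
      simp only [Function.uncurry, hΨdef]
      congr 1
    rw [this]
    apply Measurable.mul
    · apply Measurable.ennreal_ofReal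
      exact (measurable_fst.inv).mul ((measurable_fst.pow_const N).inv)
    · apply Measurable.ite
      · apply measurableSet_lt
        · exact (measurable_snd.dist measurable_const)
        · exact measurable_fst.mul_const a
      · exact hqmeas.comp measurable_snd
      · exact measurable_const
  have hswap2 : ∫⁻ t in Set.Ioo (0:ℝ) 1, ∫⁻ z in S, Ψ t z
      = ∫⁻ z in S, ∫⁻ t in Set.Ioo (0:ℝ) 1, Ψ t z := by
    apply lintegral_lintegral_swap
    exact hΨmeas.aemeasurable
  -- inner t-integral computation
  have hinner : ∀ z ∈ S, ∫⁻ t in Set.Ioo (0:ℝ) 1, Ψ t z = ENNReal.ofReal (G z) := by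
    intro z hz
    obtain ⟨hs0, hsa⟩ := hsx z hz
    set s := ‖z - x‖ with hs
    have hq_ne : q z ≠ ⊤ := ENNReal.ofReal_ne_top
    have hsa0 : 0 < s / a := by positivity
    have hsa1 : s / a < 1 := (div_lt_one ha).mpr hsa
    have hpt : ∀ t : ℝ, Ψ t z
        = q z * (Set.Ioi (s / a)).indicator (fun t => ENNReal.ofReal (t⁻¹ * (t ^ N)⁻¹)) t := by
      intro t
      have hmem : z ∈ Metric.ball x (t * a) ↔ s / a < t := by
        rw [Metric.mem_ball, dist_eq_norm, ← hs, div_lt_iff₀ ha]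
      by_cases hlt : s / a < t
      · simp only [hΨdef]
        rw [Set.indicator_of_mem (hmem.mpr hlt), Set.indicator_of_mem (Set.mem_Ioi.mpr hlt), mul_comm]
      · simp only [hΨdef]
        rw [Set.indicator_of_notMem (fun hmem' => hlt (hmem.mp hmem')),
          Set.indicator_of_notMem (fun h => hlt (Set.mem_Ioi.mp h)), mul_zero, mul_zero]
    have hseteq : Set.Ioi (s / a) ∩ Set.Ioo (0:ℝ) 1 = Set.Ioo (s / a) 1 := by
      ext t
      simp only [Set.mem_inter_iff, Set.mem_Ioi, Set.mem_Ioo]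
      exact ⟨fun ⟨h, _, h2⟩ => ⟨h, h2⟩, fun ⟨h, h2⟩ => ⟨h, lt_trans hsa0 h, h2⟩⟩
    have hstep : ∫⁻ t in Set.Ioo (0:ℝ) 1, Ψ t z
        = q z * ∫⁻ t in Set.Ioo (s / a) 1, ENNReal.ofReal (t⁻¹ * (t ^ N)⁻¹) := by
      calc ∫⁻ t in Set.Ioo (0:ℝ) 1, Ψ t z
          = ∫⁻ t in Set.Ioo (0:ℝ) 1, q z *
            (Set.Ioi (s / a)).indicator (fun t => ENNReal.ofReal (t⁻¹ * (t ^ N)⁻¹)) t := by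
            exact lintegral_congr fun t => hpt t
        _ = q z * ∫⁻ t in Set.Ioo (0:ℝ) 1,
            (Set.Ioi (s / a)).indicator (fun t => ENNReal.ofReal (t⁻¹ * (t ^ N)⁻¹)) t := by
            apply lintegral_const_mul' _ _ hq_ne
        _ = q z * ∫⁻ t in Set.Ioo (s / a) 1, ENNReal.ofReal (t⁻¹ * (t ^ N)⁻¹) := by
            rw [lintegral_indicator measurableSet_Ioi,
              Measure.restrict_restrict measurableSet_Ioi, hseteq]
    -- compute J
    have hcontJ : ContinuousOn (fun t : ℝ => t⁻¹ * (t ^ N)⁻¹) (Set.Icc (s / a) 1) := by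
      apply ContinuousOn.mul
      · exact continuousOn_id.inv₀ (fun t ht => (lt_of_lt_of_le hsa0 ht.1).ne')
      · exact (continuousOn_pow N).inv₀ (fun t ht => by
          have : 0 < t := lt_of_lt_of_le hsa0 ht.1
          positivity)
    have hintJ : IntegrableOn (fun t : ℝ => t⁻¹ * (t ^ N)⁻¹) (Set.Ioo (s / a) 1) volume :=
      (hcontJ.integrableOn_Icc).mono_set Set.Ioo_subset_Icc_self
    have hJ : ∫⁻ t in Set.Ioo (s / a) 1, ENNReal.ofReal (t⁻¹ * (t ^ N)⁻¹)
        = ENNReal.ofReal ((1 - (s / a) ^ (-(N:ℤ))) / (-(N:ℝ))) := by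
      rw [← ofReal_integral_eq_lintegral_ofReal hintJ]
      · congr 1
        rw [← MeasureTheory.integral_Ioc_eq_integral_Ioo,
          ← intervalIntegral.integral_of_le hsa1.le]
        have hcongr : ∫ t in (s/a)..1, t⁻¹ * (t ^ N)⁻¹
            = ∫ t in (s/a)..1, (t : ℝ) ^ (-(N+1:ℤ)) := by
          apply intervalIntegral.integral_congr
          intro t htu
          simp only []
          rw [Set.uIcc_of_le hsa1.le] at htu
          have ht0 : 0 < t := lt_of_lt_of_le hsa0 htu.1
          have h2 : (t:ℝ) ^ (-(N+1:ℤ)) = (t ^ (N+1:ℕ))⁻¹ := by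
            rw [← zpow_natCast t (N+1), ← zpow_neg]
            push_cast
            ring_nf
          rw [h2, pow_succ, mul_inv, mul_comm]
        rw [hcongr, integral_zpow]
        · have h1 : (-(N+1:ℤ)) + 1 = -(N:ℤ) := by ring
          rw [h1, one_zpow]
          push_cast
          ring_nf
        · refine Or.inr ⟨by omega, ?_⟩
          rw [Set.uIcc_of_le hsa1.le]
          rintro ⟨h1, -⟩
          exact absurd h1 (not_le.mpr hsa0)
      · filter_upwards [ae_restrict_mem measurableSet_Ioo] with t ht
        have ht0 : 0 < t := lt_trans hsa0 ht.1
        positivity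
    -- combine
    rw [hstep, hJ]
    simp only [hqdef, hGdef]
    rw [← ENNReal.ofReal_mul (by positivity)]
    congr 1
    exact real_cone_algebra hs0 ha (by omega)
  -- equality of lintegrals
  have hAeq : ∫⁻ y in S, ∫⁻ t in Set.Ioo (0:ℝ) 1, F t y
      = ∫⁻ z in S, ENNReal.ofReal (G z) := by
    rw [hswap1, hA1, hswap2]
    apply setLIntegral_congr_fun hmeasS
    exact hinner
  -- finiteness
  have hAfin : ∫⁻ z in S, ENNReal.ofReal (G z) ≠ ⊤ := by
    rw [← hAeq]
    have hbound : ∫⁻ y in S, ∫⁻ t in Set.Ioo (0:ℝ) 1, F t y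
        ≤ ENNReal.ofReal (M * a) * volume S := by
      calc ∫⁻ y in S, ∫⁻ t in Set.Ioo (0:ℝ) 1, F t y
          ≤ ∫⁻ _ in S, ENNReal.ofReal (M * a) := by
            apply setLIntegral_mono' hmeasS
            intro y hy
            calc ∫⁻ t in Set.Ioo (0:ℝ) 1, F t y
                ≤ ∫⁻ _ in Set.Ioo (0:ℝ) 1, ENNReal.ofReal (M * a) := by
                  apply setLIntegral_mono' measurableSet_Ioo
                  intro t ht
                  apply ENNReal.ofReal_le_ofReal
                  have h1 : x + t • (y - x) ∈ S := cone_smul_mem ht.1 ht.2.le ha hy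
                  have h2 : ‖y - x‖ ≤ a := (hsx y hy).2.le
                  exact mul_le_mul (hM _ h1) h2 (norm_nonneg _) hM0
              _ = ENNReal.ofReal (M * a) := by
                  rw [setLIntegral_const, Real.volume_Ioo]
                  norm_num
        _ = ENNReal.ofReal (M * a) * volume S := by rw [setLIntegral_const]
    exact ne_top_of_le_ne_top (ENNReal.mul_ne_top ENNReal.ofReal_ne_top hvolfin.ne) hbound
  -- endgame
  have hfc : ContinuousOn f (closure S) := hf.continuousOn
  obtain ⟨Mf, hMf⟩ := hcl.exists_bound_of_continuousOn hfc
  have hfint : IntegrableOn f S volume := by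
    apply Integrable.mono'
      (integrableOn_const hvolfin.ne : IntegrableOn (fun _ => Mf) S volume)
      ((hfc.mono subset_closure).aestronglyMeasurable hmeasS)
    rw [ae_restrict_iff' hmeasS]
    exact Filter.Eventually.of_forall (fun y hy => hMf y (subset_closure hy))
  have hconstint : IntegrableOn (fun _ => f x) S volume :=
    integrableOn_const hvolfin.ne
  have hsubint : ∫ y in S, (f x - f y) ∂volume
      = (volume S).toReal * f x - ∫ y in S, f y ∂volume := by
    rw [integral_sub hconstint hfint, setIntegral_const, smul_eq_mul, measureReal_def]
  have habs1 : |f x - (∫ y in S, f y ∂volume) / (volume S).toReal|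
      = |∫ y in S, (f x - f y) ∂volume| / (volume S).toReal := by
    rw [hsubint, eq_div_iff hvC.ne']
    rw [← abs_of_pos hvC, ← abs_mul]
    congr 1
    field_simp
    rw [abs_of_pos hvC]
    ring
  have hBreal : ∫ y in S, |f x - f y| ∂volume
      = (∫⁻ y in S, ENNReal.ofReal |f x - f y|).toReal := by
    apply integral_eq_lintegral_of_nonneg_ae
    · exact Filter.Eventually.of_forall (fun y => abs_nonneg _)
    · exact ((continuousOn_const.sub (hfc.mono subset_closure)).abs).aestronglyMeasurable hmeasS
  have hGnonneg : ∀ᵐ z ∂(volume.restrict S), 0 ≤ G z := by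
    rw [ae_restrict_iff' hmeasS]
    apply Filter.Eventually.of_forall
    intro z hz
    obtain ⟨hs0, hsa⟩ := hsx z hz
    have h1 : ‖z - x‖ ^ N ≤ a ^ N := pow_le_pow_left₀ (norm_nonneg _) hsa.le N
    have h2 : (0:ℝ) ≤ a ^ N - ‖z - x‖ ^ N := by linarith
    apply mul_nonneg (div_nonneg (norm_nonneg _) (pow_nonneg (norm_nonneg _) _))
      (div_nonneg h2 (Nat.cast_nonneg N))
  have hGreal : ∫ z in S, G z ∂volume = (∫⁻ z in S, ENNReal.ofReal (G z)).toReal := by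
    apply integral_eq_lintegral_of_nonneg_ae hGnonneg
    exact hGmeas.aestronglyMeasurable
  -- final chain
  have hmain : ∫ y in S, |f x - f y| ∂volume ≤ ∫ z in S, G z ∂volume := by
    rw [hBreal, hGreal]
    apply ENNReal.toReal_mono hAfin
    calc ∫⁻ y in S, ENNReal.ofReal |f x - f y| ≤ ∫⁻ y in S, ∫⁻ t in Set.Ioo (0:ℝ) 1, F t y := hB
      _ = ∫⁻ z in S, ENNReal.ofReal (G z) := hAeq
  simp only [hgradnorm]
  have hrhs : ∫ y in S, (‖fderiv ℝ f y‖ / ‖y - x‖ ^ (N - 1)) * ((a ^ N - ‖y - x‖ ^ N) / N) /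
      (volume S).toReal ∂volume = (∫ z in S, G z ∂volume) / (volume S).toReal := by
    rw [integral_div]
  rw [hrhs, habs1]
  have habs2 : |∫ y in S, (f x - f y) ∂volume| ≤ ∫ y in S, |f x - f y| ∂volume := by
    have h := MeasureTheory.norm_integral_le_integral_norm
      (μ := volume.restrict S) (fun y => f x - f y)
    simpa [Real.norm_eq_abs] using h
  have hfinal := le_trans habs2 hmain
  gcongr
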